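/- The number of roots in the triple root system R(Fₙ) equals n² + 55n + 126. -/

import Mathlib

open Finset

/-- Vertices of the triple diagram `Fₙ`: the central weight-3 vertex `E₀ = none`,
the chain `E₁,…,E_n` (`Sum.inl i ↦ E_{i+1}`) and the `E₆`-part `F₁,…,F₆`
(`Sum.inr i ↦ F_{i+1}`). -/
abbrev FnV (n : ℕ) := Option (Fin n ⊕ Fin 6)

/-- Adjacency of `Fₙ`: `E₀—E₁`, `E_i—E_{i+1}`, `E₀—F₁`, the chain `F₁—F₂—F₃—F₄—F₅`
and `F₆—F₃` (an `E₆` diagram attached to `E₀` along the end vertex `F₁` of its long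
arm; for `n = 0` the underlying diagram is `E₇`). -/
def FnAdj (n : ℕ) : FnV n → FnV n → Bool
  | none, some (Sum.inl i) => decide (i.val = 0)
  | some (Sum.inl i), none => decide (i.val = 0)
  | none, some (Sum.inr i) => decide (i.val = 0)
  | some (Sum.inr i), none => decide (i.val = 0)
  | some (Sum.inl i), some (Sum.inl j) => decide (i.val + 1 = j.val ∨ j.val + 1 = i.val)
  | some (Sum.inr i), some (Sum.inr j) =>
      decide ((i.val + 1 = j.val ∧ j.val ≤ 4) ∨ (j.val + 1 = i.val ∧ i.val ≤ 4) ∨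
        (i.val = 5 ∧ j.val = 2) ∨ (j.val = 5 ∧ i.val = 2))
  | _, _ => false

def FnM (n : ℕ) (x y : FnV n) : ℤ :=
  if x = y then (if x = none then -3 else -2)
  else if FnAdj n x y then 1 else 0

def FnQ (n : ℕ) (Y : FnV n → ℤ) : ℤ :=
  ∑ x, ∑ y, Y x * FnM n x y * Y y

/-! Write a vector as `(p, f)`, `p k` its coefficient at `E_k` and `f` its `E₆`-part. Completing
squares along the chain `E₀ — E₁ — ⋯ — E_n` gives, with `p (n + 1) = 0`,
`-Q = p₀² + ∑_{k ≤ n} (p_k - p_{k+1})² + (p₀² + q_{E₆}(f) - 2 p₀ f₁)`,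
where the last bracket plus `p₀²` is the positive definite `E₇`-form of `(p₀, f)`. For a
nonnegative root this forces `p₀ ∈ {0, 1}`. If `p₀ = 0`, either the chain vanishes and `f` is one
of the `36` positive roots of `E₆`, or `f = 0` and `p` is the indicator of a segment of
`E₁ ⋯ E_n` (`n (n + 1) / 2` choices). If `p₀ = 1`, `p` is the indicator of an initial segment
`E₀ ⋯ E_t` (`n + 1` choices) and `(1, f)` is a root of `E₇` with coefficient `1` at `E₀`
(`27` choices). Hence there are `2 (n (n + 1) / 2 + 36 + 27 (n + 1)) = n² + 55 n + 126` roots. -/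

namespace Fn

section E6

/- `fᵀ C f` for the Cartan matrix `C` of the `E₆`-part of `Fₙ`, `f j` being the value at
`F_{j+1}`. -/
def e6Form (f : Fin 6 → ℤ) : ℤ :=
  2 * (f 0 ^ 2 + f 1 ^ 2 + f 2 ^ 2 + f 3 ^ 2 + f 4 ^ 2 + f 5 ^ 2)
    - 2 * (f 0 * f 1 + f 1 * f 2 + f 2 * f 3 + f 3 * f 4 + f 2 * f 5)

/- Each bound is `f i ^ 2 ≤ (C⁻¹)ᵢᵢ · fᵀ C f`, the diagonal of `C⁻¹` being
`(4/3, 10/3, 6, 10/3, 4/3, 2)`; the hints complete the square along the diagram. -/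
theorem e6Form_bounds (f : Fin 6 → ℤ) :
    3 * f 0 ^ 2 ≤ 4 * e6Form f ∧ 3 * f 1 ^ 2 ≤ 10 * e6Form f ∧ f 2 ^ 2 ≤ 6 * e6Form f ∧
      3 * f 3 ^ 2 ≤ 10 * e6Form f ∧ 3 * f 4 ^ 2 ≤ 4 * e6Form f ∧ f 5 ^ 2 ≤ 2 * e6Form f := by
  unfold e6Form
  refine ⟨?_, ?_, ?_, ?_, ?_, ?_⟩
  · nlinarith [sq_nonneg (5 * f 0 - 4 * f 1), sq_nonneg (6 * f 1 - 5 * f 2),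
      sq_nonneg (7 * f 2 - 6 * f 3 - 6 * f 5), sq_nonneg (8 * f 3 - 7 * f 4 - 6 * f 5),
      sq_nonneg (3 * f 4 - 2 * f 5)]
  · nlinarith [sq_nonneg (2 * f 0 - f 1), sq_nonneg (6 * f 1 - 5 * f 2),
      sq_nonneg (7 * f 2 - 6 * f 3 - 6 * f 5), sq_nonneg (8 * f 3 - 7 * f 4 - 6 * f 5),
      sq_nonneg (3 * f 4 - 2 * f 5)]
  · nlinarith [sq_nonneg (2 * f 0 - f 1), sq_nonneg (3 * f 1 - 2 * f 2),
      sq_nonneg (7 * f 2 - 6 * f 3 - 6 * f 5), sq_nonneg (8 * f 3 - 7 * f 4 - 6 * f 5),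
      sq_nonneg (3 * f 4 - 2 * f 5)]
  · nlinarith [sq_nonneg (2 * f 0 - f 1), sq_nonneg (3 * f 1 - 2 * f 2),
      sq_nonneg (4 * f 2 - 3 * f 3 - 3 * f 5), sq_nonneg (19 * f 3 - 20 * f 4 - 15 * f 5),
      sq_nonneg (6 * f 4 - 5 * f 5)]
  · nlinarith [sq_nonneg (2 * f 0 - f 1), sq_nonneg (3 * f 1 - 2 * f 2),
      sq_nonneg (4 * f 2 - 3 * f 3 - 3 * f 5), sq_nonneg (5 * f 3 - 4 * f 4 - 3 * f 5),
      sq_nonneg (3 * f 4 - 4 * f 5)]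
  · nlinarith [sq_nonneg (2 * f 0 - f 1), sq_nonneg (3 * f 1 - 2 * f 2),
      sq_nonneg (4 * f 2 - 3 * f 3 - 3 * f 5), sq_nonneg (5 * f 3 - 4 * f 4 - 3 * f 5),
      sq_nonneg (2 * f 4 - f 5)]

theorem e6Form_nonneg (f : Fin 6 → ℤ) : 0 ≤ e6Form f := by
  nlinarith [(e6Form_bounds f).2.2.2.2.2, sq_nonneg (f 5)]

theorem even_e6Form (f : Fin 6 → ℤ) : Even (e6Form f) :=
  (even_two_mul _).sub (even_two_mul _)

theorem eq_zero_of_e6Form_eq_zero {f : Fin 6 → ℤ} (h : e6Form f = 0) : f = 0 := by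
  obtain ⟨h0, h1, h2, h3, h4, h5⟩ := e6Form_bounds f
  rw [h] at h0 h1 h2 h3 h4 h5
  funext i
  fin_cases i <;> simp <;> nlinarith

noncomputable def e6Box : Finset (Fin 6 → ℤ) :=
  Fintype.piFinset fun i => Icc 0 (![2, 3, 4, 3, 2, 2] i)

theorem mem_e6Box {f : Fin 6 → ℤ} (hf : 0 ≤ f) (hq : e6Form f ≤ 4) : f ∈ e6Box := by
  obtain ⟨h0, h1, h2, h3, h4, h5⟩ := e6Form_bounds f
  simp only [e6Box, Fintype.mem_piFinset, mem_Icc]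
  intro i
  refine ⟨hf i, ?_⟩
  fin_cases i <;> simp <;> nlinarith [hf 0, hf 1, hf 2, hf 3, hf 4, hf 5]

theorem nonneg_of_mem_e6Box {f : Fin 6 → ℤ} (hf : f ∈ e6Box) : 0 ≤ f := fun i =>
  (mem_Icc.1 (Fintype.mem_piFinset.1 hf i)).1

noncomputable def e6Roots : Finset (Fin 6 → ℤ) := e6Box.filter (e6Form · = 2)

noncomputable def e6Weights : Finset (Fin 6 → ℤ) := e6Box.filter fun f => e6Form f = 2 * f 0

theorem card_e6Roots : #e6Roots = 36 := by decide +kernel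

theorem card_e6Weights : #e6Weights = 27 := by decide +kernel

end E6

section Sums

theorem sum_range_ite_lt {M : Type*} [AddCommMonoid M] (n : ℕ) (g : ℕ → M) :
    ∑ i ∈ range n, (if i < n then g i else 0) = ∑ i ∈ range n, g i :=
  sum_congr rfl fun _ hi => if_pos (mem_range.1 hi)

theorem sum_range_adjacent {R : Type*} [CommSemiring R] (n : ℕ) (x : ℕ → R) :
    ∑ i ∈ range n, ∑ j ∈ range n, (if j + 1 = i then x i * x j else 0)
      = ∑ i ∈ range n, if i + 1 < n then x i * x (i + 1) else 0 := by
  rw [sum_comm]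
  simp [sum_ite_eq, mul_comm]

theorem sum_range_mul_succ {R : Type*} [Semiring R] (n : ℕ) (p : ℕ → R) :
    ∑ k ∈ range n, p k * p (k + 1)
      = (if 0 < n then p 0 * p 1 else 0)
        + ∑ i ∈ range n, if i + 1 < n then p (i + 1) * p (i + 1 + 1) else 0 := by
  cases n with
  | zero => simp
  | succ m =>
    rw [sum_range_succ', sum_range_succ]
    simp [sum_range_ite_lt, add_comm]

end Sums

section Energy

def energy (p : ℕ → ℤ) (N : ℕ) : ℤ := ∑ k ∈ range N, (p k - p (k + 1)) ^ 2

theorem energy_nonneg (p : ℕ → ℤ) (N : ℕ) : 0 ≤ energy p N :=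
  sum_nonneg fun _ _ => sq_nonneg _

theorem energy_succ (p : ℕ → ℤ) (N : ℕ) :
    energy p (N + 1) = (p 0 - p 1) ^ 2 + energy (fun k => p (k + 1)) N := by
  rw [energy, sum_range_succ', add_comm]
  rfl

theorem energy_sub_eq (p : ℕ → ℤ) (N : ℕ) :
    energy p N - (p 0 - p N) = ∑ k ∈ range N, (p k - p (k + 1)) * (p k - p (k + 1) - 1) := by
  rw [energy, ← sum_range_sub' p N, ← sum_sub_distrib]
  exact sum_congr rfl fun _ _ => by ring

theorem sub_le_energy (p : ℕ → ℤ) (N : ℕ) : p 0 - p N ≤ energy p N := by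
  have key : 0 ≤ ∑ k ∈ range N, (p k - p (k + 1)) * (p k - p (k + 1) - 1) :=
    sum_nonneg fun k _ => by nlinarith [Int.le_self_sq (p k - p (k + 1))]
  linarith [energy_sub_eq p N]

theorem even_energy_sub (p : ℕ → ℤ) (N : ℕ) : Even (energy p N - (p 0 - p N)) := by
  rw [energy_sub_eq]
  exact Finset.even_sum _ fun k _ => Int.even_mul_pred_self _

theorem eq_of_energy_eq_zero {p : ℕ → ℤ} {N : ℕ} (h : energy p N = 0) : ∀ k ≤ N, p k = p 0 := by
  induction N generalizing p with
  | zero => intro k hk; rw [Nat.le_zero.1 hk]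
  | succ N ih =>
    rw [energy_succ] at h
    have hshift := energy_nonneg (fun k => p (k + 1)) N
    have h01 : p 1 = p 0 := by nlinarith [sq_nonneg (p 0 - p 1)]
    rintro (_ | k) hk
    · rfl
    · rw [← h01]
      exact ih (by nlinarith [sq_nonneg (p 0 - p 1)]) k (by omega)

theorem eq_indicator_Iic_of_energy_eq_one {p : ℕ → ℤ} {N : ℕ} (h0 : p 0 = 1) (hN : p N = 0)
    (h : energy p N = 1) :
    ∃ t < N, ∀ k ≤ N, p k = (Set.Iic t).indicator 1 k := by
  induction N generalizing p with
  | zero => omega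
  | succ N ih =>
    rw [energy_succ] at h
    have hshift := energy_nonneg (fun k => p (k + 1)) N
    by_cases h01 : p 1 = 1
    · obtain ⟨t, ht, hp⟩ := ih h01 hN (by rw [h0, h01] at h; simpa using h)
      refine ⟨t + 1, by omega, ?_⟩
      rintro (_ | k) hk
      · simp [h0]
      · simpa [Set.indicator_apply] using hp k (by omega)
    · have hzero : energy (fun k => p (k + 1)) N = 0 := by
        have : 0 < (p 0 - p 1) ^ 2 := sq_pos_of_ne_zero (sub_ne_zero.2 (by omega))
        linarith
      have hconst := eq_of_energy_eq_zero hzero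
      refine ⟨0, by omega, ?_⟩
      rintro (_ | k) hk
      · simp [h0]
      · rw [hconst k (by omega), ← hconst N le_rfl, hN]
        simp

theorem eq_indicator_Ioc_of_energy_eq_two {p : ℕ → ℤ} {N : ℕ} (hp : ∀ k, 0 ≤ p k) (h0 : p 0 = 0)
    (hN : p N = 0) (h : energy p N = 2) :
    ∃ i j, i < j ∧ j < N ∧ ∀ k ≤ N, p k = (Set.Ioc i j).indicator 1 k := by
  induction N generalizing p with
  | zero => simp [energy] at h
  | succ N ih =>
    rw [energy_succ, h0] at h
    have hshift := energy_nonneg (fun k => p (k + 1)) N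
    by_cases h1 : p 1 = 0
    · obtain ⟨i, j, hij, hj, hp'⟩ := ih (fun k => hp (k + 1)) h1 hN (by simpa [h1] using h)
      refine ⟨i + 1, j + 1, by omega, by omega, ?_⟩
      rintro (_ | k) hk
      · simp [h0]
      · simpa [Set.indicator_apply] using hp' k (by omega)
    · have h1' : p 1 = 1 := by nlinarith [lt_of_le_of_ne (hp 1) (Ne.symm h1)]
      obtain ⟨t, ht, hp'⟩ := eq_indicator_Iic_of_energy_eq_one (p := fun k => p (k + 1)) h1' hN
        (by rw [h1'] at h; linarith)
      refine ⟨0, t + 1, by omega, by omega, ?_⟩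
      rintro (_ | k) hk
      · simp [h0]
      · simpa [Set.indicator_apply] using hp' k (by omega)

theorem energy_indicator_Iic {t N : ℕ} (ht : t < N) : energy ((Set.Iic t).indicator 1) N = 1 := by
  have step (k : ℕ) : ((Set.Iic t).indicator (1 : ℕ → ℤ) k - (Set.Iic t).indicator 1 (k + 1)) ^ 2
      = if t = k then 1 else 0 := by
    simp only [Set.indicator_apply, Set.mem_Iic, Pi.one_apply]
    split_ifs <;> omega
  simp [energy, step, ht]

theorem energy_indicator_Ioc {i j N : ℕ} (hij : i < j) (hj : j < N) :
    energy ((Set.Ioc i j).indicator 1) N = 2 := by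
  have step (k : ℕ) :
      ((Set.Ioc i j).indicator (1 : ℕ → ℤ) k - (Set.Ioc i j).indicator 1 (k + 1)) ^ 2
      = (if i = k then 1 else 0) + (if j = k then 1 else 0) := by
    simp only [Set.indicator_apply, Set.mem_Ioc, Pi.one_apply]
    split_ifs <;> omega
  simp [energy, step, sum_add_distrib, hj, hij.trans hj]

theorem eq_of_indicator_Iic_eq {t t' N : ℕ} (ht : t ≤ N) (ht' : t' ≤ N)
    (h : ∀ k ≤ N, (Set.Iic t).indicator (1 : ℕ → ℤ) k = (Set.Iic t').indicator 1 k) : t = t' := by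
  have h₁ := h t ht
  have h₂ := h t' ht'
  simp only [Set.indicator_apply, Set.mem_Iic, Pi.one_apply] at h₁ h₂
  split_ifs at h₁ h₂ <;> omega

theorem eq_of_indicator_Ioc_eq {i j i' j' N : ℕ} (hij : i < j) (hj : j ≤ N) (hij' : i' < j')
    (hj' : j' ≤ N)
    (h : ∀ k ≤ N, (Set.Ioc i j).indicator (1 : ℕ → ℤ) k = (Set.Ioc i' j').indicator 1 k) :
    i = i' ∧ j = j' := by
  have h₁ := h (i + 1) (by omega)
  have h₂ := h (i' + 1) (by omega)
  have h₃ := h j hj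
  have h₄ := h j' hj'
  simp only [Set.indicator_apply, Set.mem_Ioc, Pi.one_apply] at h₁ h₂ h₃ h₄
  split_ifs at h₁ h₂ h₃ h₄ <;> omega

theorem energy_eq_of_eq_zero {p : ℕ → ℤ} {N : ℕ} (hN : p (N + 1) = 0) :
    energy p (N + 1)
      = p 0 ^ 2 + 2 * ∑ k ∈ range N, p (k + 1) ^ 2 - 2 * ∑ k ∈ range N, p k * p (k + 1) := by
  have expand : energy p (N + 1) = ∑ k ∈ range (N + 1), p k ^ 2
      - 2 * ∑ k ∈ range (N + 1), p k * p (k + 1) + ∑ k ∈ range (N + 1), p (k + 1) ^ 2 := by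
    rw [energy, mul_sum, ← sum_sub_distrib, ← sum_add_distrib]
    exact sum_congr rfl fun _ _ => by ring
  rw [expand, sum_range_succ', sum_range_succ (fun k => p k * p (k + 1)),
    sum_range_succ (fun k => p (k + 1) ^ 2), hN]
  ring

end Energy

section Diagram

variable {n : ℕ}

/- `p k` is the value at `E_k`, so `p 0` sits on the central vertex; `p` is ignored beyond `E_n`. -/
def assemble (n : ℕ) (p : ℕ → ℤ) (f : Fin 6 → ℤ) : FnV n → ℤ
  | none => p 0
  | some (.inl i) => p (i + 1)
  | some (.inr j) => f j

def chainPath (Y : FnV n → ℤ) : ℕ → ℤ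
  | 0 => Y none
  | k + 1 => if h : k < n then Y (some (.inl ⟨k, h⟩)) else 0

theorem assemble_chainPath (Y : FnV n → ℤ) :
    assemble n (chainPath Y) (fun j => Y (some (.inr j))) = Y := by
  funext v
  rcases v with _ | i | j <;> simp [assemble, chainPath]

theorem chainPath_nonneg {Y : FnV n → ℤ} (hY : 0 ≤ Y) (k : ℕ) : 0 ≤ chainPath Y k := by
  rcases k with _ | k
  · exact hY none
  · dsimp only [chainPath]
    split_ifs
    exacts [hY _, le_rfl]

theorem chainPath_succ_self (Y : FnV n → ℤ) : chainPath Y (n + 1) = 0 := by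
  simp [chainPath]

theorem assemble_nonneg {p : ℕ → ℤ} {f : Fin 6 → ℤ} (hp : ∀ k, 0 ≤ p k) (hf : 0 ≤ f) :
    0 ≤ assemble n p f := by
  rintro (_ | i | j)
  exacts [hp 0, hp _, hf j]

theorem assemble_congr {p q : ℕ → ℤ} (f : Fin 6 → ℤ) (h : ∀ k ≤ n, p k = q k) :
    assemble n p f = assemble n q f := by
  funext v
  rcases v with _ | i | j
  · exact h 0 (Nat.zero_le n)
  · exact h (i + 1) i.isLt
  · rfl

theorem eq_of_assemble_eq {p q : ℕ → ℤ} {f g : Fin 6 → ℤ} (h : assemble n p f = assemble n q g) :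
    (∀ k ≤ n, p k = q k) ∧ f = g := by
  refine ⟨fun k hk => ?_, funext fun j => congrFun h (some (.inr j))⟩
  rcases k with _ | k
  · exact congrFun h none
  · exact congrFun h (some (.inl ⟨k, hk⟩))

theorem FnM_inl_inl (i j : Fin n) :
    FnM n (some (.inl i)) (some (.inl j)) =
      -2 * (if (i : ℕ) = j then 1 else 0) + (if (i : ℕ) + 1 = j then 1 else 0)
        + (if (j : ℕ) + 1 = i then 1 else 0) := by
  simp only [FnM, FnAdj, Option.some.injEq, Sum.inl.injEq, Fin.ext_iff, reduceCtorEq, if_false,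
    decide_eq_true_eq]
  split_ifs <;> omega

theorem FnQ_assemble (p : ℕ → ℤ) (f : Fin 6 → ℤ) :
    FnQ n (assemble n p f) = -3 * p 0 ^ 2 + 2 * p 0 * f 0 - e6Form f
      - 2 * ∑ k ∈ range n, p (k + 1) ^ 2 + 2 * ∑ k ∈ range n, p k * p (k + 1) := by
  simp only [FnQ, Fintype.sum_option, Fintype.sum_sum_type, Fin.sum_univ_six, FnM_inl_inl]
  simp [FnM, FnAdj, assemble, mul_add, add_mul, sum_add_distrib, sum_fin_eq_sum_range,
    sum_range_ite_lt, sum_ite_eq, sum_ite_eq', sum_range_adjacent (x := fun i => p (i + 1)),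
    sum_range_mul_succ, e6Form, sq]
  split_ifs <;> ring_nf <;> simp only [sum_mul] <;> ring

theorem FnQ_assemble_eq {p : ℕ → ℤ} (f : Fin 6 → ℤ) (hN : p (n + 1) = 0) :
    FnQ n (assemble n p f)
      = -(p 0 ^ 2 + energy p (n + 1) + (p 0 ^ 2 + e6Form f - 2 * p 0 * f 0)) := by
  rw [FnQ_assemble, energy_eq_of_eq_zero hN]
  ring

end Diagram

/- The three summands of `-FnQ` add up to at most `3`, the energy is at least `p 0` and
`3 (p 0 ^ 2 + e6Form f - 2 p 0 f 0) ≥ -(p 0) ^ 2`, so `p 0 ≤ 1`. The energy has the parity of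
`p 0` and `e6Form f` is even, which leaves only the cases below. -/
theorem posRoot_trichotomy {n : ℕ} {p : ℕ → ℤ} {f : Fin 6 → ℤ} (hp : ∀ k, 0 ≤ p k) (hf : 0 ≤ f)
    (hN : p (n + 1) = 0)
    (hQ : FnQ n (assemble n p f) = -2 ∨ FnQ n (assemble n p f) = -3) :
    (f ∈ e6Roots ∧ ∀ k ≤ n + 1, p k = 0) ∨
      (f = 0 ∧ ∃ i j, i < j ∧ j < n + 1 ∧ ∀ k ≤ n + 1, p k = (Set.Ioc i j).indicator 1 k) ∨
      (f ∈ e6Weights ∧ ∃ t < n + 1, ∀ k ≤ n + 1, p k = (Set.Iic t).indicator 1 k) := by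
  rw [FnQ_assemble_eq f hN] at hQ
  have hf0 := (e6Form_bounds f).1
  have hq := e6Form_nonneg f
  obtain ⟨r, hr⟩ := even_e6Form f
  have hw := sub_le_energy p (n + 1)
  obtain ⟨s, hs⟩ := even_energy_sub p (n + 1)
  rw [hN, sub_zero] at hw hs
  have hE7 : 0 ≤ 4 * p 0 ^ 2 + 3 * e6Form f - 6 * p 0 * f 0 := by
    nlinarith [sq_nonneg (4 * p 0 - 3 * f 0)]
  have hp1 : p 0 ≤ 1 := by rcases hQ with h | h <;> nlinarith [hp 0]
  obtain h0 | h0 : p 0 = 0 ∨ p 0 = 1 := by have := hp 0; omega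
  · rw [h0] at hQ hs
    obtain ⟨hw0, hq2⟩ | ⟨hw2, hq0⟩ :
        energy p (n + 1) = 0 ∧ e6Form f = 2 ∨ energy p (n + 1) = 2 ∧ e6Form f = 0 := by
      have := energy_nonneg p (n + 1)
      omega
    · refine .inl ⟨mem_filter.2 ⟨mem_e6Box hf (by omega), hq2⟩, fun k hk => ?_⟩
      rw [eq_of_energy_eq_zero hw0 k hk, h0]
    · exact .inr (.inl ⟨eq_zero_of_e6Form_eq_zero hq0,
        eq_indicator_Ioc_of_energy_eq_two hp h0 hN hw2⟩)
  · rw [h0] at hQ hs hE7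
    have hw1 : energy p (n + 1) = 1 ∧ e6Form f = 2 * f 0 := by omega
    have hq4 : e6Form f ≤ 4 := by
      have : f 0 ≤ 2 := by nlinarith [hf 0]
      omega
    exact .inr (.inr ⟨mem_filter.2 ⟨mem_e6Box hf hq4, hw1.2⟩,
      eq_indicator_Iic_of_energy_eq_one h0 hN hw1.1⟩)

section PositiveRoots

variable (n : ℕ)

def IsPosRoot (Y : FnV n → ℤ) : Prop := 0 ≤ Y ∧ (FnQ n Y = -2 ∨ FnQ n Y = -3)

noncomputable def intervalRoots : Finset (FnV n → ℤ) :=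
  ((range (n + 1)).sigma range).image fun ji => assemble n ((Set.Ioc ji.2 ji.1).indicator 1) 0

noncomputable def e6PartRoots : Finset (FnV n → ℤ) := e6Roots.image (assemble n 0)

noncomputable def prefixRoots : Finset (FnV n → ℤ) :=
  (range (n + 1) ×ˢ e6Weights).image fun tf => assemble n ((Set.Iic tf.1).indicator 1) tf.2

noncomputable def posRoots : Finset (FnV n → ℤ) := intervalRoots n ∪ e6PartRoots n ∪ prefixRoots n

variable {n}

theorem isPosRoot_of_mem_posRoots {Y : FnV n → ℤ} (hY : Y ∈ posRoots n) : IsPosRoot n Y := by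
  have indicator_nonneg (s : Set ℕ) (k : ℕ) : 0 ≤ s.indicator (1 : ℕ → ℤ) k :=
    Set.indicator_nonneg (fun _ _ => zero_le_one) k
  simp only [posRoots, intervalRoots, e6PartRoots, prefixRoots, mem_union, mem_image,
    mem_sigma, mem_product, mem_range] at hY
  rcases hY with (⟨⟨j, i⟩, ⟨hj, hi⟩, rfl⟩ | ⟨f, hf, rfl⟩) | ⟨⟨t, f⟩, ⟨ht, hf⟩, rfl⟩
  · dsimp only at hj hi
    refine ⟨assemble_nonneg (indicator_nonneg _) le_rfl, ?_⟩
    rw [FnQ_assemble_eq _ (by simp; omega)]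
    simp [energy_indicator_Ioc hi (by omega : j < n + 1), e6Form]
  · obtain ⟨hf, hq⟩ := mem_filter.1 hf
    refine ⟨assemble_nonneg (fun _ => le_rfl) (nonneg_of_mem_e6Box hf), ?_⟩
    rw [FnQ_assemble_eq _ rfl]
    simp [energy, hq]
  · obtain ⟨hf, hq⟩ := mem_filter.1 hf
    refine ⟨assemble_nonneg (indicator_nonneg _) (nonneg_of_mem_e6Box hf), ?_⟩
    rw [FnQ_assemble_eq _ (by simp; omega)]
    simp [energy_indicator_Iic (by omega : t < n + 1), hq]

theorem mem_posRoots_of_isPosRoot {Y : FnV n → ℤ} (hY : IsPosRoot n Y) : Y ∈ posRoots n := by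
  obtain ⟨hY, hQ⟩ := hY
  rw [← assemble_chainPath Y] at hQ ⊢
  rcases posRoot_trichotomy (chainPath_nonneg hY) (fun j => hY (some (.inr j))) (chainPath_succ_self Y) hQ
    with ⟨hf, hp⟩ | ⟨hf, i, j, hij, hj, hp⟩ | ⟨hf, t, ht, hp⟩
  · refine mem_union_left _ (mem_union_right _ (mem_image.2 ⟨_, hf, ?_⟩))
    exact assemble_congr _ fun k hk => (hp k (by omega)).symm
  · refine mem_union_left _ (mem_union_left _ (mem_image.2
      ⟨⟨j, i⟩, mem_sigma.2 ⟨mem_range.2 hj, mem_range.2 hij⟩, ?_⟩))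
    rw [← hf]
    exact assemble_congr _ fun k hk => (hp k (by omega)).symm
  · refine mem_union_right _ (mem_image.2 ⟨⟨t, _⟩, mem_product.2 ⟨mem_range.2 ht, hf⟩, ?_⟩)
    exact assemble_congr _ fun k hk => (hp k (by omega)).symm

theorem mem_posRoots {Y : FnV n → ℤ} : Y ∈ posRoots n ↔ IsPosRoot n Y :=
  ⟨isPosRoot_of_mem_posRoots, mem_posRoots_of_isPosRoot⟩

theorem card_intervalRoots : #(intervalRoots n) = ∑ j ∈ range (n + 1), j := by
  rw [intervalRoots, card_image_of_injOn, card_sigma]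
  · simp
  rintro ⟨j, i⟩ hji ⟨j', i'⟩ hji' he
  simp only [coe_sigma, Set.mem_sigma_iff, mem_coe, mem_range] at hji hji'
  obtain ⟨rfl, rfl⟩ :=
    eq_of_indicator_Ioc_eq hji.2 (by omega) hji'.2 (by omega) (eq_of_assemble_eq he).1
  rfl

theorem card_e6PartRoots : #(e6PartRoots n) = 36 := by
  rw [e6PartRoots, card_image_of_injective _ fun f g h => (eq_of_assemble_eq h).2, card_e6Roots]

theorem card_prefixRoots : #(prefixRoots n) = 27 * (n + 1) := by
  rw [prefixRoots, card_image_of_injOn, card_product, card_range, card_e6Weights, mul_comm]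
  rintro ⟨t, f⟩ htf ⟨t', f'⟩ htf' he
  simp only [coe_product, Set.mem_prod, mem_coe, mem_range] at htf htf'
  obtain ⟨hp, rfl⟩ := eq_of_assemble_eq he
  obtain rfl := eq_of_indicator_Iic_eq (by omega) (by omega) hp
  rfl

theorem disjoint_intervalRoots_e6PartRoots : Disjoint (intervalRoots n) (e6PartRoots n) := by
  simp only [disjoint_left, intervalRoots, e6PartRoots, mem_image]
  rintro _ ⟨_, _, rfl⟩ ⟨f, hf, he⟩
  obtain rfl := (eq_of_assemble_eq he).2
  simpa [e6Form] using (mem_filter.1 hf).2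

theorem disjoint_prefixRoots : Disjoint (intervalRoots n ∪ e6PartRoots n) (prefixRoots n) := by
  simp only [disjoint_left, intervalRoots, e6PartRoots, prefixRoots, mem_union, mem_image]
  rintro _ (⟨_, _, rfl⟩ | ⟨_, _, rfl⟩) ⟨_, _, he⟩ <;> simpa [assemble] using congrFun he none

theorem card_posRoots : #(posRoots n) = ∑ j ∈ range (n + 1), j + 36 + 27 * (n + 1) := by
  rw [posRoots, card_union_of_disjoint disjoint_prefixRoots,
    card_union_of_disjoint disjoint_intervalRoots_e6PartRoots, card_intervalRoots,
    card_e6PartRoots, card_prefixRoots]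

end PositiveRoots

section Roots

open scoped Pointwise

variable {n : ℕ}

theorem FnQ_neg (Y : FnV n → ℤ) : FnQ n (-Y) = FnQ n Y := by
  simp [FnQ]

theorem disjoint_posRoots_neg : Disjoint (posRoots n) (-posRoots n) := by
  rw [disjoint_left]
  intro Y h h'
  rw [mem_neg', mem_posRoots, IsPosRoot, FnQ_neg] at h'
  rw [mem_posRoots, IsPosRoot] at h
  obtain rfl : Y = 0 := le_antisymm (neg_nonneg.1 h'.1) h.1
  simp [FnQ] at h

theorem rootSet_eq (n : ℕ) :
    {Y : FnV n → ℤ | Y ≠ 0 ∧ ((∀ i, 0 ≤ Y i) ∨ (∀ i, Y i ≤ 0)) ∧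
      (FnQ n Y = -2 ∨ FnQ n Y = -3)} = ↑(posRoots n ∪ -posRoots n) := by
  ext Y
  simp only [Set.mem_ofPred_eq, coe_union, Set.mem_union, mem_coe, mem_neg', mem_posRoots,
    IsPosRoot, FnQ_neg, Pi.le_def, Pi.zero_apply, neg_nonneg]
  constructor
  · rintro ⟨-, hY | hY, hQ⟩
    exacts [.inl ⟨hY, hQ⟩, .inr ⟨hY, hQ⟩]
  · rintro (⟨hY, hQ⟩ | ⟨hY, hQ⟩) <;> refine ⟨?_, by tauto, hQ⟩ <;> rintro rfl <;> simp [FnQ] at hQ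

end Roots

end Fn

theorem stmt_10 (n : ℕ) :
    {Y : FnV n → ℤ | Y ≠ 0 ∧ ((∀ i, 0 ≤ Y i) ∨ (∀ i, Y i ≤ 0)) ∧
      (FnQ n Y = -2 ∨ FnQ n Y = -3)}.ncard
    = n ^ 2 + 55 * n + 126 := by
  have gauss := sum_range_id_mul_two (n + 1)
  rw [Nat.add_sub_cancel] at gauss
  rw [Fn.rootSet_eq, Set.ncard_coe_finset, card_union_of_disjoint Fn.disjoint_posRoots_neg,
    card_neg, Fn.card_posRoots]
  nlinarith
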